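/- arXiv:math/0311426 — 6 statements merged into one kernel-verified Lean document; each statement's English description precedes it below -/
import Mathlib

section
/- For every n ≥ 1, the n-th Bernoulli number b_n equals ∑_{k=1}^{n} (−1)^k · (1/(k+1)) · ∑_{(n_1,…,n_k): n_i ≥ 1, n_1+⋯+n_k = n} multinomial(n; n_1,…,n_k), where multinomial(n; n_1,…,n_k) = n!/(n_1!⋯n_k!). -/
/-!
Write `E = exp X - 1`. Then `X / E = log (1 + E) / E = ∑ₖ (-1)ᵏ Eᵏ / (k + 1)`, and since `E` has
no constant term only `k ≤ n` contributes to the coefficient of `Xⁿ`. Expanding `Eᵏ` with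
`E = ∑_{m ≥ 1} Xᵐ / m!` shows that `n! [Xⁿ] Eᵏ` is the sum of the multinomial coefficients over the
compositions of `n` into `k` positive parts.

To avoid composing power series, the first identity is checked modulo `X ^ (n + 1)`: the
truncation `L = ∑_{k ≤ n} (-1)ᵏ E^(k+1) / (k + 1)` of `log (1 + E)` has derivative
`∑_{k ≤ n} (-E)ᵏ exp X = 1 - (-E)^(n+1)`, so `L ≡ X = B E` modulo `X ^ (n + 2)` for the Bernoulli
series `B`; as `E` is `X` times a unit, `E` can be cancelled at the cost of one power of `X`.
-/

open PowerSeries Finset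
open scoped Nat

namespace PowerSeries

theorem coeff_pow_eq_sum_antidiagonalTuple {R : Type*} [CommSemiring R] (f : R⟦X⟧) (k n : ℕ) :
    coeff n (f ^ k) = ∑ c ∈ Nat.antidiagonalTuple k n, ∏ i, coeff (c i) f := by
  rw [← Fin.prod_const, coeff_prod, finsuppAntidiag, sum_map,
    ← piAntidiag_univ_fin_eq_antidiagonalTuple]
  exact sum_attach (piAntidiag univ n) (fun c => ∏ i, coeff (c i) f)

theorem X_pow_succ_dvd_of_X_pow_dvd_derivative {R : Type*} [CommRing R] [IsAddTorsionFree R]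
    {f : R⟦X⟧} {m : ℕ} (h₀ : constantCoeff f = 0) (h : X ^ m ∣ d⁄dX R f) : X ^ (m + 1) ∣ f := by
  rw [X_pow_dvd_iff] at h ⊢
  rintro (_ | j) hj
  · rwa [coeff_zero_eq_constantCoeff]
  · have := h j (by omega)
    rw [coeff_derivative, mul_comm, ← Nat.cast_succ, ← nsmul_eq_mul] at this
    exact (smul_eq_zero_iff_right j.succ_ne_zero).1 this

theorem X_pow_dvd_of_X_pow_succ_dvd_mul {R : Type*} [CommRing R] {f g : R⟦X⟧} {m : ℕ}
    (hg₀ : constantCoeff g = 0) (hg₁ : IsUnit (coeff 1 g)) (h : X ^ (m + 1) ∣ f * g) :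
    X ^ m ∣ f := by
  obtain ⟨u, rfl⟩ := X_dvd_iff.2 hg₀
  have hu : IsUnit u := isUnit_iff_constantCoeff.2 (by simpa using hg₁)
  rw [← hu.dvd_mul_right]
  obtain ⟨q, hq⟩ := h
  exact ⟨q, X_mul_cancel (by linear_combination hq)⟩

end PowerSeries

theorem coeff_exp_sub_one (m : ℕ) :
    coeff m (exp ℚ - 1) = if m = 0 then 0 else (m ! : ℚ)⁻¹ := by
  rcases m with _ | m <;> simp [coeff_exp, coeff_one]

theorem constantCoeff_exp_sub_one : constantCoeff (exp ℚ - 1) = 0 := by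
  simp

theorem factorial_mul_prod_coeff_exp_sub_one {k : ℕ} (c : Fin k → ℕ) :
    (∑ i, c i)! * ∏ i, coeff (c i) (exp ℚ - 1) =
      if ∀ i, 1 ≤ c i then (Nat.multinomial univ c : ℚ) else 0 := by
  split_ifs with hc
  · have hspec : (∏ i, ((c i)! : ℚ)) * Nat.multinomial univ c = (∑ i, c i)! := by
      exact_mod_cast Nat.multinomial_spec univ c
    have hcoeff : ∀ i, coeff (c i) (exp ℚ - 1) = ((c i)! : ℚ)⁻¹ := fun i => by
      rw [coeff_exp_sub_one, if_neg (Nat.one_le_iff_ne_zero.1 (hc i))]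
    rw [← hspec, prod_congr rfl fun i _ => hcoeff i, prod_inv_distrib]
    field_simp
  · obtain ⟨i, hi⟩ := not_forall.1 hc
    rw [prod_eq_zero (mem_univ i) (by rw [coeff_exp_sub_one, if_pos (by omega)]), mul_zero]

theorem factorial_mul_coeff_exp_sub_one_pow (k n : ℕ) :
    n ! * coeff n ((exp ℚ - 1) ^ k) =
      ∑ c ∈ (Nat.antidiagonalTuple k n).filter (fun c => ∀ i, 1 ≤ c i),
        (Nat.multinomial univ c : ℚ) := by
  rw [sum_filter, coeff_pow_eq_sum_antidiagonalTuple, mul_sum]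
  refine sum_congr rfl fun c hc => ?_
  rw [← factorial_mul_prod_coeff_exp_sub_one, (Nat.mem_antidiagonalTuple.1 hc)]

theorem derivative_exp_sub_one : d⁄dX ℚ (exp ℚ - 1) = exp ℚ := by
  rw [map_sub, derivative_exp, derivative_one, sub_zero]

theorem derivative_sum_smul_exp_sub_one_pow_succ (n : ℕ) :
    d⁄dX ℚ (∑ k ∈ range (n + 1), ((-1) ^ k / (k + 1) : ℚ) • (exp ℚ - 1) ^ (k + 1)) =
      1 - (1 - exp ℚ) ^ (n + 1) := by
  have hterm : ∀ k : ℕ, d⁄dX ℚ (((-1) ^ k / (k + 1) : ℚ) • (exp ℚ - 1) ^ (k + 1)) =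
      (1 - exp ℚ) ^ k * exp ℚ := fun k => by
    have hk : (k + 1 : ℚ) ≠ 0 := by positivity
    have hneg : 1 - exp ℚ = C (-1 : ℚ) * (exp ℚ - 1) := by simp
    rw [Derivation.map_smul, derivative_pow, derivative_exp_sub_one, Nat.add_sub_cancel,
      smul_eq_C_mul, ← map_natCast C, hneg, mul_pow, ← map_pow, ← mul_assoc, ← mul_assoc,
      ← map_mul, Nat.cast_succ, div_mul_cancel₀ _ hk]
  rw [map_sum, sum_congr rfl fun k _ => hterm k, ← sum_mul]
  have := geom_sum_mul (1 - exp ℚ) (n + 1)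
  linear_combination -this

theorem X_pow_succ_dvd_bernoulliPowerSeries_sub (n : ℕ) :
    X ^ (n + 1) ∣ bernoulliPowerSeries ℚ -
      ∑ k ∈ range (n + 1), ((-1) ^ k / (k + 1) : ℚ) • (exp ℚ - 1) ^ k := by
  set G := ∑ k ∈ range (n + 1), ((-1) ^ k / (k + 1) : ℚ) • (exp ℚ - 1) ^ k
  have hGE : G * (exp ℚ - 1) =
      ∑ k ∈ range (n + 1), ((-1) ^ k / (k + 1) : ℚ) • (exp ℚ - 1) ^ (k + 1) := by
    simp only [G, sum_mul, smul_mul_assoc, pow_succ]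
  have hderiv : d⁄dX ℚ ((bernoulliPowerSeries ℚ - G) * (exp ℚ - 1)) = (1 - exp ℚ) ^ (n + 1) := by
    rw [sub_mul, hGE, bernoulliPowerSeries_mul_exp_sub_one, map_sub, derivative_X,
      derivative_sum_smul_exp_sub_one_pow_succ, sub_sub_cancel]
  have hdvd : X ^ (n + 1) ∣ (1 - exp ℚ) ^ (n + 1) :=
    pow_dvd_pow_of_dvd (X_dvd_iff.2 (by simp)) _
  refine X_pow_dvd_of_X_pow_succ_dvd_mul constantCoeff_exp_sub_one (by simp [coeff_exp_sub_one])
    (X_pow_succ_dvd_of_X_pow_dvd_derivative (by simp) (hderiv ▸ hdvd))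

theorem coeff_bernoulliPowerSeries_eq_sum (n : ℕ) :
    coeff n (bernoulliPowerSeries ℚ) =
      ∑ k ∈ range (n + 1), ((-1) ^ k / (k + 1) : ℚ) * coeff n ((exp ℚ - 1) ^ k) := by
  have h := X_pow_dvd_iff.1 (X_pow_succ_dvd_bernoulliPowerSeries_sub n) n n.lt_succ_self
  simp only [map_sub, sub_eq_zero, map_sum, coeff_smul, smul_eq_mul] at h
  exact h

/-- For `n ≥ 1`, `b_n = ∑_{k=1}^n (-1)^k/(k+1) · ∑_{compositions of n into k parts} n!/(n_1!⋯n_k!)`. -/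
theorem stmt_3 (n : ℕ) (hn : 1 ≤ n) :
    bernoulli n = ∑ k ∈ Finset.Icc 1 n, (-1 : ℚ) ^ k * (1 / (k + 1)) *
      ∑ c ∈ (Finset.Nat.antidiagonalTuple k n).filter (fun c => ∀ i, 1 ≤ c i),
        (Nat.multinomial Finset.univ c : ℚ) := by
  have hB : bernoulli n = n ! * coeff n (bernoulliPowerSeries ℚ) := by
    simp only [bernoulliPowerSeries, coeff_mk, Algebra.algebraMap_self, RingHom.id_apply]
    field_simp
  have h0 : coeff n ((exp ℚ - 1) ^ 0) = 0 := by rw [pow_zero, coeff_one, if_neg (by omega)]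
  rw [hB, coeff_bernoulliPowerSeries_eq_sum, sum_range_eq_add_Ico _ (by omega), h0, mul_zero,
    zero_add, Ico_add_one_right_eq_Icc, mul_sum]
  refine sum_congr rfl fun k _ => ?_
  rw [← factorial_mul_coeff_exp_sub_one_pow]
  ring
end

section
/- The coefficient of t in the strict order polynomial of the shrub S_n equals the n-th Bernoulli number b_n, for every n ≥ 1. -/
/-!
A strictly order-preserving map `S_n → [m]` sending the root to `j` sends each of the `n` leaves
anywhere above `j`, so there are `∑_{k < m} k ^ n` of them. Faulhaber's formula
`(n + 1) ∑_{k < m} k ^ n = B_{n+1}(m) - B_{n+1}` identifies `(n + 1) Q` with a Bernoulli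
polynomial minus its constant term, and the linear coefficient of `B_{n+1}` is `(n + 1) b_n`.
-/

open Finset

theorem Nat.card_shrub_strictMono_eq_sum_pow (n m : ℕ) :
    Nat.card {f : Option (Fin n) → Fin m // ∀ i : Fin n, f none < f (some i)} =
      ∑ k ∈ range m, k ^ n := by
  let e : {f : Option (Fin n) → Fin m // ∀ i : Fin n, f none < f (some i)} ≃
      Σ j : Fin m, (Fin n → {x : Fin m // j < x}) :=
    { toFun := fun f => ⟨f.1 none, fun i => ⟨f.1 (some i), f.2 i⟩⟩
      invFun := fun p => ⟨fun o => o.elim p.1 (fun i => (p.2 i).1), fun i => (p.2 i).2⟩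
      left_inv := fun f => by ext o; cases o <;> rfl
      right_inv := fun p => rfl }
  have hfiber (j : Fin m) : Fintype.card (Fin n → {x : Fin m // j < x}) = (m - 1 - j) ^ n := by
    rw [Fintype.card_fun, Fintype.card_subtype, filter_lt_eq_Ioi, Fin.card_Ioi, Fintype.card_fin]
  rw [Nat.card_congr e, Nat.card_eq_fintype_card, Fintype.card_sigma]
  simp only [hfiber]
  rw [Fin.sum_univ_eq_sum_range (fun j => (m - 1 - j) ^ n) m, ← sum_range_reflect]
  refine sum_congr rfl fun j hj => ?_
  rw [mem_range] at hj
  congr 1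
  omega

namespace Polynomial

theorem eq_of_eval_natCast_eq {R : Type*} [CommRing R] [IsDomain R] [CharZero R]
    {p q : R[X]} (h : ∀ m : ℕ, 1 ≤ m → p.eval (m : R) = q.eval (m : R)) : p = q := by
  refine eq_of_infinite_eval_eq p q (Set.Infinite.mono ?_ ((Set.Ici_infinite 1).image
    fun a _ b _ hab => Nat.cast_injective hab))
  rintro _ ⟨m, hm, rfl⟩
  exact h m hm

theorem coeff_bernoulli_succ_one (n : ℕ) :
    (bernoulli (n + 1)).coeff 1 = _root_.bernoulli n * (n + 1 : ℕ) := by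
  rw [coeff_bernoulli, if_pos (Nat.le_add_left 1 n), Nat.add_sub_cancel, Nat.choose_one_right]

theorem natCast_succ_mul_eq_bernoulli_sub {n : ℕ} {Q : ℚ[X]}
    (hQ : ∀ m : ℕ, 1 ≤ m → Q.eval (m : ℚ) = ∑ k ∈ range m, (k : ℚ) ^ n) :
    ((n + 1 : ℕ) : ℚ[X]) * Q = bernoulli (n + 1) - C (_root_.bernoulli (n + 1)) := by
  refine eq_of_eval_natCast_eq fun m hm => ?_
  rw [eval_mul, eval_natCast, hQ m hm, eval_sub, eval_C, Nat.cast_succ,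
    sum_range_pow_eq_bernoulli_sub]

end Polynomial

theorem stmt_10_general (n : ℕ) (Q : Polynomial ℚ)
    (hQ : ∀ m : ℕ, 1 ≤ m → Q.eval (m : ℚ)
      = (Nat.card {f : Option (Fin n) → Fin m // ∀ i : Fin n, f none < f (some i)} : ℚ)) :
    Q.coeff 1 = bernoulli n := by
  have hsum (m : ℕ) (hm : 1 ≤ m) : Q.eval (m : ℚ) = ∑ k ∈ range m, (k : ℚ) ^ n := by
    rw [hQ m hm, Nat.card_shrub_strictMono_eq_sum_pow, Nat.cast_sum]
    simp only [Nat.cast_pow]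
  have hcoeff :=
    congrArg (Polynomial.coeff · 1) (Polynomial.natCast_succ_mul_eq_bernoulli_sub hsum)
  simp only [Polynomial.coeff_natCast_mul, Polynomial.coeff_sub, Polynomial.coeff_C_of_ne_zero
    one_ne_zero, sub_zero, Polynomial.coeff_bernoulli_succ_one] at hcoeff
  exact mul_left_cancel₀ (by positivity) (hcoeff.trans (mul_comm _ _))

/-- Let `Q` be the strict order polynomial of the shrub `S_n` (root `none` below `n` pairwise
incomparable children `some i`), i.e. the polynomial whose value at each positive integer `m`
is the number of strictly order-preserving maps `S_n → [m]`. For `n ≥ 1`, the coefficient of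
`t` in `Q` is the `n`-th Bernoulli number. -/
theorem stmt_10 (n : ℕ) (hn : 1 ≤ n) (Q : Polynomial ℚ)
    (hQ : ∀ m : ℕ, 1 ≤ m → Q.eval (m : ℚ)
      = (Nat.card {f : Option (Fin n) → Fin m // ∀ i : Fin n, f none < f (some i)} : ℚ)) :
    Q.coeff 1 = bernoulli n :=
  stmt_10_general n Q hQ
end

section
/- Let P be a finite poset with strict order polynomial Ω̄(P; t). Then Ω̄(P; t+1) − Ω̄(P; t) = ∑_{∅ ≠ S ⊆ Min(P)} Ω̄(P∖S; t), where the sum is over all nonempty subsets S of the set of minimal elements of P, and Ω̄(∅; t) = 1. -/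
open scoped Classical

section StmtAux

variable {P : Type*} [Fintype P] [PartialOrder P]

/-- The set of points sent to `0`. -/
noncomputable def stmt13ZeroSet {n : ℕ}
    (f : {x : P // x ∈ (Finset.univ : Finset P)} → Fin (n+1)) : Finset P :=
  Finset.univ.filter (fun x => f ⟨x, Finset.mem_univ x⟩ = 0)

lemma stmt13ZeroSet_min {n : ℕ} (f : {x : P // x ∈ (Finset.univ : Finset P)} → Fin (n+1))
    (hf : ∀ a b, a < b → f a < f b) :
    ∀ x ∈ stmt13ZeroSet f, ∀ y : P, y ≤ x → y = x := by
  intro x hx y hyx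
  by_contra hne
  have hlt : (⟨y, Finset.mem_univ y⟩ : {x : P // x ∈ (Finset.univ : Finset P)})
      < ⟨x, Finset.mem_univ x⟩ := Subtype.mk_lt_mk.mpr (lt_of_le_of_ne hyx hne)
  have := hf _ _ hlt
  simp [stmt13ZeroSet] at hx
  rw [hx] at this
  exact Fin.not_lt_zero _ this

/-- Strict order-preserving maps to `[n+1]` sending exactly `S` to `0` are in bijection
with strict order-preserving maps from the complement of `S` to `[n]`, when `S` consists
of minimal elements. -/
noncomputable def stmt13FiberEquiv {n : ℕ} (S : Finset P)
    (hS : ∀ x ∈ S, ∀ y : P, y ≤ x → y = x) :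
    {f : {x : P // x ∈ (Finset.univ : Finset P)} → Fin (n+1) //
        (∀ a b, a < b → f a < f b) ∧ stmt13ZeroSet f = S} ≃
    {g : {x : P // x ∈ Sᶜ} → Fin n // ∀ a b, a < b → g a < g b} where
  toFun := fun ⟨f, hmono, hzero⟩ => by
    have key : ∀ x : P, f ⟨x, Finset.mem_univ x⟩ = 0 ↔ x ∈ S := by
      intro x; rw [← hzero]; simp [stmt13ZeroSet]
    refine ⟨fun x => Fin.pred (f ⟨x.1, Finset.mem_univ x.1⟩) ?_, ?_⟩
    · intro h
      exact (Finset.mem_compl.mp x.2) ((key x.1).mp h)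
    · intro a b hab
      have hlt : (⟨a.1, Finset.mem_univ a.1⟩ : {x : P // x ∈ (Finset.univ : Finset P)})
          < ⟨b.1, Finset.mem_univ b.1⟩ := Subtype.mk_lt_mk.mpr (Subtype.coe_lt_coe.mpr hab)
      have h2 := hmono _ _ hlt
      have ha0 : (f ⟨a.1, Finset.mem_univ a.1⟩).val ≠ 0 := by
        intro h
        exact (Finset.mem_compl.mp a.2) ((key a.1).mp (Fin.ext h))
      simp only [Fin.lt_def, Fin.coe_pred] at h2 ⊢
      omega
  invFun := fun ⟨g, hg⟩ => by
    refine ⟨fun x => if h : x.1 ∈ S then 0 else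
      (g ⟨x.1, Finset.mem_compl.mpr h⟩).succ, ?_, ?_⟩
    · intro a b hab
      have hab' : a.1 < b.1 := Subtype.coe_lt_coe.mpr hab
      by_cases hb : b.1 ∈ S
      · exact absurd (hS b.1 hb a.1 hab'.le) hab'.ne
      · by_cases ha : a.1 ∈ S
        · simp [ha, hb, Fin.succ_pos]
        · have : (⟨a.1, Finset.mem_compl.mpr ha⟩ : {x : P // x ∈ Sᶜ})
              < ⟨b.1, Finset.mem_compl.mpr hb⟩ := Subtype.mk_lt_mk.mpr hab'
          have := hg _ _ this
          simp [ha, hb, Fin.succ_lt_succ_iff, this]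
    · ext x
      simp only [stmt13ZeroSet, Finset.mem_filter, Finset.mem_univ, true_and]
      by_cases hx : x ∈ S
      · simp [hx]
      · simp [hx, Fin.succ_ne_zero]
  left_inv := by
    rintro ⟨f, hmono, hzero⟩
    have key : ∀ x : P, f ⟨x, Finset.mem_univ x⟩ = 0 ↔ x ∈ S := by
      intro x; rw [← hzero]; simp [stmt13ZeroSet]
    apply Subtype.ext
    funext x
    by_cases hx : x.1 ∈ S
    · simp only [hx, dif_pos]
      exact ((key x.1).mpr hx).symm
    · simp only [hx, dif_neg, not_false_iff, Fin.succ_pred]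
  right_inv := by
    rintro ⟨g, hg⟩
    apply Subtype.ext
    funext x
    have hx : x.1 ∉ S := Finset.mem_compl.mp x.2
    simp only [hx, dif_neg, not_false_iff, Fin.pred_succ]

lemma stmt13_card_split (n : ℕ) :
    Nat.card {f : {x : P // x ∈ (Finset.univ : Finset P)} → Fin (n+1) //
        ∀ a b, a < b → f a < f b}
      = ∑ S ∈ Finset.univ.filter (fun S : Finset P => ∀ x ∈ S, ∀ y : P, y ≤ x → y = x),
          Nat.card {g : {x : P // x ∈ Sᶜ} → Fin n // ∀ a b, a < b → g a < g b} := by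
  classical
  have hmem : ∀ f : {f : {x : P // x ∈ (Finset.univ : Finset P)} → Fin (n+1) //
      ∀ a b, a < b → f a < f b}, f ∈ (Finset.univ : Finset _) →
      stmt13ZeroSet f.1 ∈
        Finset.univ.filter (fun S : Finset P => ∀ x ∈ S, ∀ y : P, y ≤ x → y = x) := by
    intro f _
    simp only [Finset.mem_filter, Finset.mem_univ, true_and]
    exact stmt13ZeroSet_min f.1 f.2
  have hfib := Finset.card_eq_sum_card_fiberwise hmem
  rw [Nat.card_eq_fintype_card, ← Finset.card_univ, hfib]
  refine Finset.sum_congr rfl ?_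
  intro S hS
  simp only [Finset.mem_filter, Finset.mem_univ, true_and] at hS
  have he : Nat.card {f : {x : P // x ∈ (Finset.univ : Finset P)} → Fin (n+1) //
        (∀ a b, a < b → f a < f b) ∧ stmt13ZeroSet f = S}
      = Nat.card {g : {x : P // x ∈ Sᶜ} → Fin n // ∀ a b, a < b → g a < g b} :=
    Nat.card_congr (stmt13FiberEquiv S hS)
  rw [← he, Nat.card_eq_fintype_card]
  have : Fintype.card {f : {x : P // x ∈ (Finset.univ : Finset P)} → Fin (n+1) //
      (∀ a b, a < b → f a < f b) ∧ stmt13ZeroSet f = S}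
    = Fintype.card {f : {f : {x : P // x ∈ (Finset.univ : Finset P)} → Fin (n+1) //
        ∀ a b, a < b → f a < f b} // stmt13ZeroSet f.1 = S} :=
    Fintype.card_congr (Equiv.subtypeSubtypeEquivSubtypeInter _ _).symm
  rw [this, Fintype.card_subtype]

lemma stmt13_filter_eq :
    (Finset.univ.filter (fun S : Finset P => ∀ x ∈ S, ∀ y : P, y ≤ x → y = x))
      = insert ∅ (Finset.univ.filter
          (fun S : Finset P => S.Nonempty ∧ ∀ x ∈ S, ∀ y : P, y ≤ x → y = x)) := by
  ext S
  simp only [Finset.mem_filter, Finset.mem_univ, true_and, Finset.mem_insert]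
  constructor
  · intro h
    rcases S.eq_empty_or_nonempty with h' | h'
    · exact Or.inl h'
    · exact Or.inr ⟨h', h⟩
  · rintro (rfl | ⟨-, h⟩)
    · intro x hx; simp at hx
    · exact h

end StmtAux

/-- Let `P` be a finite poset and for each subset `T ⊆ P` let `Ω̄ T` be the strict order
polynomial of the induced sub-poset on `T` (its value at each positive integer `n` counts
strictly order-preserving maps `T → [n]`). Then
`Ω̄(P; t+1) − Ω̄(P; t) = ∑_{∅ ≠ S ⊆ Min(P)} Ω̄(P∖S; t)`,
summing over nonempty subsets of the set of minimal elements of `P`. -/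
theorem stmt_13 {P : Type*} [Fintype P] [PartialOrder P]
    (Ωb : Finset P → Polynomial ℚ)
    (hΩb : ∀ (T : Finset P) (n : ℕ), 1 ≤ n →
      (Ωb T).eval (n : ℚ) = (Nat.card {f : {x : P // x ∈ T} → Fin n //
        ∀ a b : {x : P // x ∈ T}, a < b → f a < f b} : ℚ)) :
    ∀ t : ℚ,
      (Ωb Finset.univ).eval (t + 1) - (Ωb Finset.univ).eval t
        = ∑ S ∈ Finset.univ.filter
            (fun S : Finset P => S.Nonempty ∧ ∀ x ∈ S, ∀ y : P, y ≤ x → y = x),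
          (Ωb Sᶜ).eval t := by
  classical
  set F := Finset.univ.filter
      (fun S : Finset P => S.Nonempty ∧ ∀ x ∈ S, ∀ y : P, y ≤ x → y = x) with hF
  set Q : Polynomial ℚ :=
    (Ωb Finset.univ).comp (Polynomial.X + 1) - Ωb Finset.univ - ∑ S ∈ F, Ωb Sᶜ with hQ
  have hroot : ∀ n : ℕ, 1 ≤ n → Q.eval (n : ℚ) = 0 := by
    intro n hn
    have h1 : ((n : ℚ) + 1) = ((n + 1 : ℕ) : ℚ) := by push_cast; ring
    have hsplit := stmt13_card_split (P := P) n
    have hins := stmt13_filter_eq (P := P)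
    have hnotmem : (∅ : Finset P) ∉ F := by
      simp [hF, Finset.not_nonempty_empty]
    simp only [hQ, Polynomial.eval_sub, Polynomial.eval_comp, Polynomial.eval_add,
      Polynomial.eval_X, Polynomial.eval_one, Polynomial.eval_finset_sum]
    have hA : (Ωb (Finset.univ : Finset P)).eval ((n : ℚ) + 1)
        = (Nat.card {f : {x : P // x ∈ (Finset.univ : Finset P)} → Fin (n+1) //
          ∀ a b, a < b → f a < f b} : ℚ) := by
      rw [h1]
      exact hΩb Finset.univ (n + 1) (Nat.le_add_left 1 n)
    rw [hA]
    have hrhs : ∀ S ∈ Finset.univ.filter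
        (fun S : Finset P => ∀ x ∈ S, ∀ y : P, y ≤ x → y = x),
        (Ωb Sᶜ).eval (n : ℚ)
          = (Nat.card {g : {x : P // x ∈ Sᶜ} → Fin n // ∀ a b, a < b → g a < g b} : ℚ) := by
      intro S _
      exact hΩb Sᶜ n hn
    have hsum : (Nat.card {f : {x : P // x ∈ (Finset.univ : Finset P)} → Fin (n+1) //
          ∀ a b, a < b → f a < f b} : ℚ)
        = ∑ S ∈ Finset.univ.filter
            (fun S : Finset P => ∀ x ∈ S, ∀ y : P, y ≤ x → y = x),
          (Ωb Sᶜ).eval (n : ℚ) := by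
      rw [Finset.sum_congr rfl hrhs, hsplit]
      push_cast
      ring
    rw [hsum, hins, Finset.sum_insert hnotmem, Finset.compl_empty,
      hΩb Finset.univ n hn]
    ring
  have hQ0 : Q = 0 := by
    apply Polynomial.eq_zero_of_infinite_isRoot
    apply Set.infinite_of_injective_forall_mem (f := fun k : ℕ => ((k + 1 : ℕ) : ℚ))
    · intro a b h
      simpa using Nat.cast_injective h
    · intro a
      exact hroot (a + 1) (Nat.le_add_left 1 a)
  intro t
  have := congrArg (Polynomial.eval t) hQ0
  simp only [hQ, Polynomial.eval_sub, Polynomial.eval_comp, Polynomial.eval_add,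
    Polynomial.eval_X, Polynomial.eval_one, Polynomial.eval_finset_sum,
    Polynomial.eval_zero] at this
  linarith [this]
end

section
/- For any finite poset P, Ω(P; −1) = (−1)^{|P|} if P is an antichain, and Ω(P; −1) = 0 otherwise. -/
/-!
Let `s_k(P)` be the number of monotone surjections `P → Fin k`. A monotone map `P → Fin n`
factors uniquely through its image, so `Ω(P; t) = ∑ₖ s_k(P) * (t choose k)` and
`Ω(P; -1) = χ(P) := ∑ₖ (-1)^k s_k(P)`. Recording the down-set of points not sent to the top
value gives `s_{k+1}(P) = ∑_I s_k(I)` over the proper down-sets `I` of `P`, hence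
`χ(P) = [P = ∅] - ∑_I χ(I)`. By induction only the antichain down-sets contribute; these are
exactly the subsets of the set of minimal elements, and the alternating sum over them collapses
to `(-1)^|P|` if every element is minimal and to `0` otherwise.
-/

open scoped Classical
open Finset Function Polynomial

lemma Nat.card_eq_sum_card_fiber {X β : Type*} [Finite X] [Fintype β] (φ : X → β) :
    Nat.card X = ∑ b, Nat.card {x // φ x = b} := by
  rw [← Nat.card_sigma]
  exact Nat.card_congr (Equiv.sigmaFiberEquiv φ).symm

section MonotoneSurjections

variable {α β γ : Type*} [Preorder α] [Preorder β] [Preorder γ]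

def OrderIso.monoSurjCongr (e : β ≃o γ) :
    {f : α → β // Monotone f ∧ Surjective f} ≃ {f : α → γ // Monotone f ∧ Surjective f} where
  toFun f := ⟨e ∘ f.1, e.monotone.comp f.2.1, e.surjective.comp f.2.2⟩
  invFun f := ⟨e.symm ∘ f.1, e.symm.monotone.comp f.2.1, e.symm.surjective.comp f.2.2⟩
  left_inv f := by ext; simp
  right_inv f := by ext; simp

def monotoneRangeEqEquiv (s : Set β) :
    {f : α → β // Monotone f ∧ Set.range f = s} ≃ {g : α → s // Monotone g ∧ Surjective g} where
  toFun f :=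
    have hs : ∀ x, f.1 x ∈ s := fun x => f.2.2.subset (Set.mem_range_self x)
    ⟨s.codRestrict f.1 hs, fun _ _ h => f.2.1 h, (Set.surjective_codRestrict hs).2 f.2.2⟩
  invFun g := ⟨Subtype.val ∘ g.1, Subtype.mono_coe _ |>.comp g.2.1, by
    rw [Set.range_comp, g.2.2.range_eq, Set.image_univ, Subtype.range_coe]⟩
  left_inv _ := rfl
  right_inv _ := rfl

end MonotoneSurjections

noncomputable def monoSurjCount (α : Type*) [Preorder α] (k : ℕ) : ℕ :=
  Nat.card {f : α → Fin k // Monotone f ∧ Surjective f}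

lemma monoSurjCount_zero {α : Type*} [Preorder α] :
    monoSurjCount α 0 = if IsEmpty α then 1 else 0 := by
  split_ifs with h
  · rw [monoSurjCount, Nat.card_eq_one_iff_unique]
    exact ⟨⟨fun f g => Subtype.ext (funext h.elim)⟩,
      ⟨⟨h.elim, fun a => h.elim a, fun j => j.elim0⟩⟩⟩
  · rw [monoSurjCount, Nat.card_eq_zero]
    exact .inl ⟨fun f => (f.1 (not_isEmpty_iff.1 h).some).elim0⟩

lemma monoSurjCount_eq_zero_of_card_lt {α : Type*} [Fintype α] [Preorder α] {k : ℕ}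
    (h : Fintype.card α < k) : monoSurjCount α k = 0 := by
  rw [monoSurjCount, Nat.card_eq_zero]
  refine .inl ⟨fun ⟨f, _, hf⟩ => ?_⟩
  simpa using (Fintype.card_le_of_surjective f hf).trans_lt h

lemma card_monotone_range_eq {α β : Type*} [Preorder α] [LinearOrder β] (T : Finset β) :
    Nat.card {f : α → β // Monotone f ∧ Set.range f = T} = monoSurjCount α T.card :=
  Nat.card_congr <| (monotoneRangeEqEquiv _).trans (T.orderIsoOfFin rfl).symm.monoSurjCongr

theorem card_monotone_fin_eq_sum_choose {α : Type*} [Fintype α] [Preorder α] (n : ℕ) :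
    Nat.card {f : α → Fin n // Monotone f}
      = ∑ k ∈ range (Fintype.card α + 1), n.choose k * monoSurjCount α k := by
  have himage (f : α → Fin n) (T : Finset (Fin n)) : univ.image f = T ↔ Set.range f = T := by
    rw [← coe_inj, coe_image, coe_univ, Set.image_univ]
  calc Nat.card {f : α → Fin n // Monotone f}
      = ∑ T : Finset (Fin n), Nat.card {f : α → Fin n // Monotone f ∧ Set.range f = T} := by
        rw [Nat.card_eq_sum_card_fiber fun f => univ.image f.1]
        refine sum_congr rfl fun T _ => Nat.card_congr ?_
        exact (Equiv.subtypeSubtypeEquivSubtypeInter _ (fun f => univ.image f = T)).trans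
          (Equiv.subtypeEquivRight fun f => and_congr_right' (himage f T))
    _ = ∑ T ∈ (univ : Finset (Fin n)).powerset, monoSurjCount α T.card := by
        simp only [powerset_univ, card_monotone_range_eq]
    _ = ∑ k ∈ range (n + Fintype.card α + 1), n.choose k * monoSurjCount α k := by
        simp only [sum_powerset_apply_card, card_univ, Fintype.card_fin, smul_eq_mul]
        refine (eventually_constant_sum (fun k hk => ?_) (by omega)).symm
        rw [Nat.choose_eq_zero_of_lt hk, zero_mul]
    _ = _ := eventually_constant_sum (fun k hk => by
        rw [monoSurjCount_eq_zero_of_card_lt hk, mul_zero]) (by omega)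

noncomputable def signedSurjCount (α : Type*) [Fintype α] [Preorder α] : ℤ :=
  ∑ k ∈ range (Fintype.card α + 1), (-1 : ℤ) ^ k * monoSurjCount α k

lemma signedSurjCount_eq_sum_range {α : Type*} [Fintype α] [Preorder α] {m : ℕ}
    (hm : Fintype.card α < m) :
    signedSurjCount α = ∑ k ∈ range m, (-1 : ℤ) ^ k * monoSurjCount α k :=
  (eventually_constant_sum (fun k hk => by
    rw [monoSurjCount_eq_zero_of_card_lt hk, Nat.cast_zero, mul_zero]) hm).symm

lemma descPochhammer_eval_neg_one {R : Type*} [CommRing R] (k : ℕ) :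
    (descPochhammer R k).eval (-1) = (-1) ^ k * k.factorial := by
  have h := ascPochhammer_eval_neg_eq_descPochhammer (R := R) (-1) k
  rw [neg_neg, ascPochhammer_eval_one] at h
  rw [h, ← mul_assoc, ← mul_pow, neg_one_mul, neg_neg, one_pow, one_mul]

section OrderPoly

noncomputable def orderPoly (α : Type*) [Fintype α] [Preorder α] : ℚ[X] :=
  ∑ k ∈ range (Fintype.card α + 1),
    C ((monoSurjCount α k : ℚ) / k.factorial) * descPochhammer ℚ k

variable {α : Type*} [Fintype α] [Preorder α]

lemma orderPoly_eval_natCast (n : ℕ) :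
    (orderPoly α).eval (n : ℚ) = Nat.card {f : α → Fin n // Monotone f} := by
  rw [card_monotone_fin_eq_sum_choose, orderPoly, eval_finsetSum]
  push_cast
  refine sum_congr rfl fun k _ => ?_
  rw [eval_mul, eval_C, descPochhammer_eval_eq_descFactorial,
    Nat.descFactorial_eq_factorial_mul_choose]
  push_cast
  field_simp

theorem eq_orderPoly_of_eval_natCast {Ω : ℚ[X]}
    (hΩ : ∀ n : ℕ, 1 ≤ n → Ω.eval (n : ℚ) = Nat.card {f : α → Fin n // Monotone f}) :
    Ω = orderPoly α := by
  refine eq_of_infinite_eval_eq _ _ <| Set.infinite_of_injective_forall_mem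
    (f := fun n : ℕ => ((n + 1 : ℕ) : ℚ)) (fun a b h => by simpa using h) fun n => ?_
  simp only [Set.mem_ofPred_eq, hΩ (n + 1) n.succ_pos, orderPoly_eval_natCast]

lemma orderPoly_eval_neg_one : (orderPoly α).eval (-1) = signedSurjCount α := by
  rw [orderPoly, signedSurjCount, eval_finsetSum]
  push_cast
  refine sum_congr rfl fun k _ => ?_
  rw [eval_mul, eval_C, descPochhammer_eval_neg_one]
  field_simp

end OrderPoly

section TopLayer

noncomputable def properLowerSets (α : Type*) [Fintype α] [Preorder α] : Finset (Finset α) :=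
  {I | IsLowerSet (I : Set α) ∧ I ≠ univ}

variable {α : Type*} {k : ℕ}

noncomputable def belowTop [Fintype α] (f : α → Fin (k + 1)) : Finset α :=
  {x | f x ≠ Fin.last k}

@[simp]
lemma mem_belowTop [Fintype α] {f : α → Fin (k + 1)} {x : α} :
    x ∈ belowTop f ↔ f x ≠ Fin.last k := by
  simp [belowTop]

lemma belowTop_mem_properLowerSets [Fintype α] [Preorder α] {f : α → Fin (k + 1)}
    (hf : Monotone f) (hs : Surjective f) : belowTop f ∈ properLowerSets α := by
  obtain ⟨x, hx⟩ := hs (Fin.last k)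
  simp only [properLowerSets, belowTop, mem_filter, mem_univ, true_and, coe_filter, Ne,
    eq_univ_iff_forall, not_forall]
  exact ⟨fun a b hba ha => ((hf hba).trans_lt (Fin.lt_last_iff_ne_last.2 ha)).ne, x, by simp [hx]⟩

noncomputable def extendTop {I : Finset α} (g : I → Fin k) (x : α) : Fin (k + 1) :=
  if h : x ∈ I then (g ⟨x, h⟩).castSucc else Fin.last k

variable {I : Finset α} {g : I → Fin k}

lemma belowTop_extendTop [Fintype α] : belowTop (extendTop g) = I := by
  ext x
  by_cases hx : x ∈ I <;> simp [extendTop, hx, Fin.castSucc_ne_last]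

lemma monotone_extendTop [Preorder α] (hI : IsLowerSet (I : Set α)) (hg : Monotone g) :
    Monotone (extendTop g) := by
  intro a b hab
  by_cases hb : b ∈ I
  · have ha : a ∈ I := hI hab hb
    simpa [extendTop, ha, hb] using hg (Subtype.mk_le_mk.2 hab)
  · simp [extendTop, hb, Fin.le_last]

lemma surjective_extendTop [Fintype α] (hI : I ≠ univ) (hg : Surjective g) :
    Surjective (extendTop g) := by
  intro v
  induction v using Fin.lastCases with
  | last =>
    obtain ⟨x, -, hx⟩ := exists_of_ssubset (ssubset_univ_iff.2 hI)
    exact ⟨x, by simp [extendTop, hx]⟩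
  | cast j =>
    obtain ⟨x, rfl⟩ := hg j
    exact ⟨x, by simp [extendTop]⟩

noncomputable def monoSurjBelowTopEquiv [Fintype α] [Preorder α] (hI : I ∈ properLowerSets α) :
    {f : {f : α → Fin (k + 1) // Monotone f ∧ Surjective f} // belowTop f.1 = I}
      ≃ {g : I → Fin k // Monotone g ∧ Surjective g} where
  toFun f :=
    have hx (x : I) : f.1.1 x ≠ Fin.last k := mem_belowTop.1 (f.2.ge x.2)
    ⟨fun x => (f.1.1 x).castPred (hx x),
      fun a b hab => Fin.castPred_le_castPred_iff.2 (f.1.2.1 hab),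
      fun j => by
        obtain ⟨x, hxj⟩ := f.1.2.2 j.castSucc
        have hxI : x ∈ I := f.2.le (mem_belowTop.2 (hxj ▸ Fin.castSucc_ne_last j))
        exact ⟨⟨x, hxI⟩, by simp [hxj]⟩⟩
  invFun g :=
    have hI := mem_filter.1 hI
    ⟨⟨extendTop g.1, monotone_extendTop hI.2.1 g.2.1, surjective_extendTop hI.2.2 g.2.2⟩,
      belowTop_extendTop⟩
  left_inv f := by
    ext x
    by_cases hx : x ∈ I
    · simp [extendTop, hx]
    · have : f.1.1 x = Fin.last k := by
        by_contra h
        exact hx (f.2.le (mem_belowTop.2 h))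
      simp [extendTop, hx, this]
  right_inv g := by
    ext x
    simp [extendTop]

theorem monoSurjCount_succ [Fintype α] [Preorder α] (k : ℕ) :
    monoSurjCount α (k + 1) = ∑ I ∈ properLowerSets α, monoSurjCount I k := by
  rw [monoSurjCount, Nat.card_eq_sum_card_fiber (fun f => belowTop f.1),
    ← sum_filter_of_ne (p := (· ∈ properLowerSets α)) fun I _ hI => ?_]
  · rw [filter_mem_eq_inter, univ_inter]
    exact sum_congr rfl fun I hI => Nat.card_congr (monoSurjBelowTopEquiv hI)
  · obtain ⟨⟨f, hf⟩, rfl⟩ := Nat.card_ne_zero.1 hI |>.1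
    exact belowTop_mem_properLowerSets hf.1 hf.2

end TopLayer

theorem signedSurjCount_eq_sub_sum {α : Type*} [Fintype α] [Preorder α] :
    signedSurjCount α
      = (if IsEmpty α then 1 else 0) - ∑ I ∈ properLowerSets α, signedSurjCount I := by
  rw [signedSurjCount, sum_range_succ', monoSurjCount_zero, add_comm, sub_eq_add_neg,
    ← sum_neg_distrib]
  push_cast
  simp only [one_mul, monoSurjCount_succ, Nat.cast_sum, mul_sum]
  rw [sum_comm]
  refine congrArg _ (sum_congr rfl fun I hI => ?_)
  have hcard : Fintype.card I < Fintype.card α := by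
    rw [Fintype.card_coe, card_lt_iff_ne_univ]
    exact (mem_filter.1 hI).2.2
  rw [signedSurjCount_eq_sum_range hcard, ← sum_neg_distrib]
  exact sum_congr rfl fun k _ => by ring

section Minimal

variable {α : Type*} [Fintype α] [PartialOrder α]

lemma subset_filter_isMin_iff {I : Finset α} :
    I ⊆ ({x | IsMin x} : Finset α) ↔ IsLowerSet (I : Set α) ∧ ∀ x y : I, x ≤ y → x = y := by
  simp only [subset_iff, mem_filter, mem_univ, true_and]
  constructor
  · intro h
    refine ⟨fun a b hba ha => (h ha hba).antisymm hba ▸ ha, fun x y hxy => ?_⟩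
    exact Subtype.ext (le_antisymm hxy (h y.2 hxy))
  · rintro ⟨hlow, hanti⟩ a ha b hba
    exact (congrArg Subtype.val (hanti ⟨b, hlow hba ha⟩ ⟨a, ha⟩ hba)).ge

lemma filter_isMin_eq_univ_iff :
    ({x | IsMin x} : Finset α) = univ ↔ ∀ x y : α, x ≤ y → x = y := by
  simp only [filter_eq_self, mem_univ, true_implies]
  exact ⟨fun h x y hxy => le_antisymm hxy (h y hxy), fun h y x hxy => (h x y hxy).ge⟩

lemma filter_isMin_eq_empty_iff : ({x | IsMin x} : Finset α) = ∅ ↔ IsEmpty α := by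
  refine ⟨fun h => not_nonempty_iff.1 fun ⟨a⟩ => ?_, fun _ => eq_empty_of_isEmpty _⟩
  obtain ⟨x, hx⟩ := exists_minimal_of_wellFoundedLT (fun _ : α => True) ⟨a, trivial⟩
  exact eq_empty_iff_forall_notMem.1 h x (by simpa using hx)

end Minimal

lemma sum_powerset_filter_ne_univ_neg_one_pow_card {α : Type*} [Fintype α] (M : Finset α) :
    ∑ I ∈ M.powerset with I ≠ univ, (-1 : ℤ) ^ I.card
      = (if M = ∅ then 1 else 0) - if M = univ then (-1) ^ Fintype.card α else 0 := by
  rw [filter_ne', ← sum_powerset_neg_one_pow_card]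
  split_ifs with h
  · rw [h, sum_erase_eq_sub (mem_powerset_self _), card_univ]
  · rw [erase_eq_of_notMem fun hM => h (univ_subset_iff.1 (mem_powerset.1 hM)), sub_zero]

theorem signedSurjCount_eq (α : Type*) [Fintype α] [PartialOrder α] :
    signedSurjCount α = if ∀ x y : α, x ≤ y → x = y then (-1) ^ Fintype.card α else 0 := by
  induction hn : Fintype.card α using Nat.strong_induction_on generalizing α with
  | _ n ih =>
  subst hn
  have hIH (I) (hI : I ∈ properLowerSets α) : signedSurjCount I
      = if ∀ x y : I, x ≤ y → x = y then (-1) ^ I.card else 0 := by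
    convert ih _ ((card_lt_iff_ne_univ _).2 (mem_filter.1 hI).2.2) I (Fintype.card_coe I)
  have hsum : ∑ I ∈ properLowerSets α, signedSurjCount I
      = ∑ I ∈ ({x | IsMin x} : Finset α).powerset with I ≠ univ, (-1) ^ I.card := by
    rw [sum_congr rfl hIH, ← sum_filter]
    congr 1
    ext I
    simp only [properLowerSets, mem_filter, mem_univ, true_and, mem_powerset,
      subset_filter_isMin_iff]
    tauto
  rw [signedSurjCount_eq_sub_sum, hsum, sum_powerset_filter_ne_univ_neg_one_pow_card,
    if_congr filter_isMin_eq_empty_iff rfl rfl, if_congr filter_isMin_eq_univ_iff rfl rfl,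
    sub_sub_cancel]

/-- For a finite poset `P` with order polynomial `Ω`, `Ω(P; −1) = (−1)^{|P|}` if `P` is an
antichain, and `Ω(P; −1) = 0` otherwise. -/
theorem stmt_15 {P : Type*} [Fintype P] [PartialOrder P]
    (Ω : Polynomial ℚ)
    (hΩ : ∀ n : ℕ, 1 ≤ n →
      Ω.eval (n : ℚ) = (Nat.card {f : P → Fin n // Monotone f} : ℚ)) :
    Ω.eval (-1) = if ∀ x y : P, x ≤ y → x = y then (-1 : ℚ) ^ Fintype.card P else 0 := by
  rw [eq_orderPoly_of_eval_natCast hΩ, orderPoly_eval_neg_one, signedSurjCount_eq]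
  push_cast
  rfl
end

section
/- Let (P, ω) be a finite labeled poset, let A be the adjacency matrix of its ω-graph (rows/columns indexed by ideals of P, with entry 1 in position (I,J) iff I ⊊ J and J∖I is an ω-natural subset), and suppose the ideals are ordered so that A is strictly upper triangular. Then for every positive integer n, the (∅, P) entry of (I + A)^n equals the number of ω-order-preserving maps f: P → [n]. -/
open scoped Classical

/-- `I` is an order ideal (down-set) of the finite poset `P`. -/
def IsIdeal {P : Type*} [PartialOrder P] (I : Finset P) : Prop :=
  ∀ x ∈ I, ∀ y : P, y ≤ x → y ∈ I

/-- A subset `S` is `ω`-natural if `ω` restricted to `S` is order-preserving. -/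
def IsNatural {P : Type*} [PartialOrder P] (ω : P → ℕ+) (S : Finset P) : Prop :=
  ∀ x ∈ S, ∀ y ∈ S, x ≤ y → ω x ≤ ω y

/-- `f : P → [n]` is `ω`-order-preserving: it is order-preserving, and whenever `x > y`
with `ω x < ω y` we have `f x > f y`. -/
def IsOmegaOP {P : Type*} [PartialOrder P] (ω : P → ℕ+) {n : ℕ} (f : P → Fin n) : Prop :=
  Monotone f ∧ ∀ x y : P, y < x → ω x < ω y → f y < f x

/-- The adjacency matrix of the `ω`-graph: rows/columns indexed by ideals, with entry `1`
in position `(I, J)` iff `I ⊊ J` and `J ∖ I` is `ω`-natural. -/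
noncomputable def omegaAdjMatrix {P : Type*} [Fintype P] [PartialOrder P] (ω : P → ℕ+) :
    Matrix {I : Finset P // IsIdeal I} {I : Finset P // IsIdeal I} ℚ :=
  fun I J => if I.1 ⊂ J.1 ∧ IsNatural ω (J.1 \ I.1) then 1 else 0

/-!
An entry of `(1 + A) ^ n` counts the multichains `∅ = I₀ ⊆ I₁ ⊆ ⋯ ⊆ Iₙ = P` of ideals whose
successive differences are `ω`-natural; the identity matrix supplies the repeated steps
`Iₖ = Iₖ₊₁`. Such a chain is the sequence of strict sublevel sets `Iₖ = {x | f x < k}` of a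
unique map `f : P → [n]`. These sets are ideals exactly when `f` is order-preserving, and since
`Iₖ₊₁ \ Iₖ = f⁻¹(k)`, the differences are `ω`-natural exactly when `f` is `ω`-order-preserving.
-/

open Finset

section RelationChains

variable {ι : Type*} [Fintype ι] {R : ι → ι → Prop}

variable (R) in
noncomputable def relChains (n : ℕ) (i j : ι) : Finset (Fin (n + 1) → ι) :=
  {g | g 0 = i ∧ g (Fin.last n) = j ∧ ∀ k : Fin n, R (g k.castSucc) (g k.succ)}

@[simp]
lemma mem_relChains {n : ℕ} {i j : ι} {g : Fin (n + 1) → ι} :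
    g ∈ relChains R n i j ↔
      g 0 = i ∧ g (Fin.last n) = j ∧ ∀ k : Fin n, R (g k.castSucc) (g k.succ) := by
  simp [relChains]

lemma card_relChains_zero [DecidableEq ι] (i j : ι) :
    #(relChains R 0 i j) = if i = j then 1 else 0 := by
  split_ifs with h
  · subst h
    rw [card_eq_one]
    exact ⟨fun _ => i, by ext g; simp [funext_iff, Fin.forall_fin_one]⟩
  · rw [card_eq_zero, eq_empty_iff_forall_notMem]
    intro g hg
    simp only [mem_relChains, Fin.last_zero] at hg
    exact h (hg.1.symm.trans hg.2.1)

lemma card_relChains_succ_fiber (n : ℕ) (i j K : ι) :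
    #{g ∈ relChains R (n + 1) i j | g (Fin.last n).castSucc = K} =
      if R K j then #(relChains R n i K) else 0 := by
  split_ifs with hK
  · refine card_nbij' Fin.init (fun c => Fin.snoc c j) ?_ ?_ ?_ ?_
    · intro g hg
      simp only [mem_coe, mem_filter, mem_relChains] at hg ⊢
      obtain ⟨⟨h0, -, hstep⟩, hK⟩ := hg
      refine ⟨h0, hK, fun k => ?_⟩
      simpa [Fin.init] using hstep k.castSucc
    · intro c hc
      simp only [mem_coe, mem_filter, mem_relChains] at hc ⊢
      obtain ⟨h0, hK', hstep⟩ := hc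
      refine ⟨⟨?_, by simp, fun k => ?_⟩, by simpa using hK'⟩
      · rw [← Fin.castSucc_zero, Fin.snoc_castSucc]
        exact h0
      · induction k using Fin.lastCases with
        | last => simpa [hK'] using hK
        | cast k =>
          rw [Fin.succ_castSucc, Fin.snoc_castSucc, Fin.snoc_castSucc]
          exact hstep k
    · intro g hg
      simp only [mem_coe, mem_filter, mem_relChains] at hg
      simp [← hg.1.2.1]
    · intro h _
      simp
  · rw [card_eq_zero, filter_eq_empty_iff]
    intro g hg hgK
    simp only [mem_relChains] at hg
    have := hg.2.2 (Fin.last n)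
    rw [hgK, Fin.succ_last, hg.2.1] at this
    exact hK this

lemma card_relChains_succ (n : ℕ) (i j : ι) :
    #(relChains R (n + 1) i j) = ∑ K, if R K j then #(relChains R n i K) else 0 := by
  rw [card_eq_sum_card_fiberwise (f := fun g => g (Fin.last n).castSucc) (t := univ)
    (fun _ _ => mem_univ _)]
  simp_rw [card_relChains_succ_fiber]

theorem Matrix.pow_apply_eq_card_relChains [DecidableEq ι] {α : Type*} [Semiring α] (n : ℕ)
    (i j : ι) :
    ((Matrix.of fun a b => if R a b then (1 : α) else 0) ^ n) i j = #(relChains R n i j) := by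
  induction n generalizing j with
  | zero => simp [Matrix.one_apply, card_relChains_zero]
  | succ n ih =>
    simp [pow_succ, Matrix.mul_apply, card_relChains_succ, ih]

end RelationChains

section Sublevel

variable {P : Type*} [Fintype P] {n : ℕ}

noncomputable def sublevel (f : P → Fin n) (k : Fin (n + 1)) : Finset P :=
  {x | (f x).castSucc < k}

@[simp]
lemma mem_sublevel {f : P → Fin n} {k : Fin (n + 1)} {x : P} :
    x ∈ sublevel f k ↔ (f x).castSucc < k := by
  simp [sublevel]

lemma sublevel_zero (f : P → Fin n) : sublevel f 0 = ∅ := by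
  ext x; simp

lemma sublevel_last (f : P → Fin n) : sublevel f (Fin.last n) = univ := by
  ext x; simp [Fin.castSucc_lt_last]

lemma sublevel_monotone (f : P → Fin n) : Monotone (sublevel f) :=
  fun _ _ hkl _ hx => (mem_sublevel.1 hx).trans_le hkl |> mem_sublevel.2

lemma sublevel_succ_sdiff_castSucc (f : P → Fin n) (k : Fin n) :
    sublevel f k.succ \ sublevel f k.castSucc = ({x | f x = k} : Finset P) := by
  ext x
  simp [Fin.castSucc_lt_succ_iff, Fin.castSucc_lt_castSucc_iff, le_antisymm_iff]

lemma sublevel_injective : Function.Injective (sublevel (P := P) (n := n)) := by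
  intro f f' h
  have key (f f' : P → Fin n) (h : sublevel f = sublevel f') (x : P) : f x ≤ f' x := by
    have hx : x ∈ sublevel f' (f' x).succ := by simp [Fin.castSucc_lt_succ_iff]
    rw [← h] at hx
    simpa [Fin.castSucc_lt_succ_iff] using hx
  exact funext fun x => le_antisymm (key f f' h x) (key f' f h.symm x)

lemma exists_sublevel_eq {g : Fin (n + 1) → Finset P} (hg : Monotone g) (h0 : g 0 = ∅)
    (hlast : g (Fin.last n) = univ) : ∃ f : P → Fin n, sublevel f = g := by
  -- `f x + 1` is the first index `i` with `x ∈ g i`, which is nonzero since `g 0 = ∅`.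
  have hne (x : P) : ({i | x ∈ g i} : Finset (Fin (n + 1))).Nonempty :=
    ⟨Fin.last n, by simp [hlast]⟩
  set m : P → Fin (n + 1) := fun x => ({i | x ∈ g i} : Finset _).min' (hne x)
  have mem_iff (x : P) (i : Fin (n + 1)) : x ∈ g i ↔ m x ≤ i :=
    ⟨fun hx => min'_le _ _ (by simpa using hx),
      fun hi => hg hi (by simpa using min'_mem _ (hne x))⟩
  have hm0 (x : P) : m x ≠ 0 := fun h => by simpa [h0] using (mem_iff x 0).2 h.le
  refine ⟨fun x => (m x).pred (hm0 x), funext fun i => ?_⟩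
  ext x
  have := Fin.val_ne_zero_iff.2 (hm0 x)
  rw [mem_sublevel, mem_iff, Fin.lt_def, Fin.le_def, Fin.val_castSucc, Fin.val_pred]
  omega

end Sublevel

section OmegaGraph

variable {P : Type*} [Fintype P] [PartialOrder P] (ω : P → ℕ+)

/-- The relation whose indicator matrix is `1 + omegaAdjMatrix ω`: `⊆` instead of `⊊` accounts
for the identity. -/
def omegaStep (I J : {I : Finset P // IsIdeal I}) : Prop :=
  I.1 ⊆ J.1 ∧ IsNatural ω (J.1 \ I.1)

lemma one_add_omegaAdjMatrix :
    1 + omegaAdjMatrix ω = Matrix.of fun I J => if omegaStep ω I J then 1 else 0 := by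
  ext I J
  by_cases h : I = J
  · subst h
    simp +contextual [omegaAdjMatrix, omegaStep, IsNatural]
  · have hne : I.1 ≠ J.1 := fun e => h (Subtype.ext e)
    simp only [Matrix.add_apply, Matrix.one_apply_ne h, zero_add, omegaAdjMatrix, Matrix.of_apply,
      omegaStep, Finset.ssubset_iff_subset_ne, hne, ne_eq, not_false_eq_true, and_true]
    congr 1

variable {ω} {n : ℕ} {f : P → Fin n}

lemma isIdeal_sublevel_iff : (∀ k, IsIdeal (sublevel f k)) ↔ Monotone f := by
  refine ⟨fun h x y hxy => ?_, fun hf k x hx y hyx => ?_⟩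
  · have hy : y ∈ sublevel f (f y).succ := by simp [Fin.castSucc_lt_succ_iff]
    simpa [Fin.castSucc_lt_succ_iff] using h _ y hy x hxy
  · simp only [mem_sublevel] at hx ⊢
    exact lt_of_le_of_lt (Fin.castSucc_le_castSucc_iff.2 (hf hyx)) hx

lemma isOmegaOP_iff : IsOmegaOP ω f ↔ Monotone f ∧ ∀ k, IsNatural ω {x | f x = k} := by
  refine ⟨fun ⟨hf, hstrict⟩ => ⟨hf, fun k x hx y hy hxy => ?_⟩, fun ⟨hf, hnat⟩ => ⟨hf, ?_⟩⟩
  · simp only [mem_filter, mem_univ, true_and] at hx hy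
    by_contra! hωyx
    rcases hxy.lt_or_eq with hlt | rfl
    · exact (hstrict y x hlt hωyx).ne (hx.trans hy.symm)
    · exact hωyx.false
  · intro x y hyx hωxy
    refine (hf hyx.le).lt_of_ne fun he => ?_
    exact (hnat (f x) y (by simp [he]) x (by simp) hyx.le).not_gt hωxy

variable (ω) in
lemma card_isOmegaOP_eq_card_relChains (n : ℕ) :
    Nat.card {f : P → Fin n // IsOmegaOP ω f} =
      #(relChains (omegaStep ω) n ⟨∅, by simp [IsIdeal]⟩ ⟨univ, by simp [IsIdeal]⟩) := by
  rw [Nat.card_eq_fintype_card, Fintype.card_subtype]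
  refine card_bij (fun f hf k =>
    ⟨sublevel f k, isIdeal_sublevel_iff.2 (isOmegaOP_iff.1 (mem_filter.1 hf).2).1 k⟩) ?_ ?_ ?_
  · intro f hf
    obtain ⟨-, hnat⟩ := isOmegaOP_iff.1 (mem_filter.1 hf).2
    refine mem_relChains.2 ⟨Subtype.ext (sublevel_zero f), Subtype.ext (sublevel_last f),
      fun k => ⟨sublevel_monotone f (Fin.castSucc_le_succ k), ?_⟩⟩
    rw [sublevel_succ_sdiff_castSucc f k]
    exact hnat k
  · intro f _ f' _ h
    exact sublevel_injective (funext fun k => congrArg Subtype.val (congrFun h k))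
  · intro g hg
    obtain ⟨h0, hlast, hstep⟩ := mem_relChains.1 hg
    obtain ⟨f, hf⟩ := exists_sublevel_eq (g := fun k => (g k).1)
      (Fin.monotone_iff_le_succ.2 fun k => (hstep k).1) (congrArg Subtype.val h0)
      (congrArg Subtype.val hlast)
    have hmono : Monotone f := isIdeal_sublevel_iff.1 fun k => hf ▸ (g k).2
    refine ⟨f, mem_filter.2 ⟨mem_univ _, isOmegaOP_iff.2 ⟨hmono, fun k => ?_⟩⟩,
      funext fun k => Subtype.ext (congrFun hf k)⟩
    rw [← sublevel_succ_sdiff_castSucc f k, hf]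
    exact (hstep k).2

end OmegaGraph

theorem stmt_17 {P : Type*} [Fintype P] [PartialOrder P]
    (ω : P → ℕ+) :
    ∀ n : ℕ, 1 ≤ n →
      ((1 + omegaAdjMatrix ω) ^ n)
          ⟨∅, by intro x hx; simp at hx⟩
          ⟨Finset.univ, fun x _ y _ => Finset.mem_univ y⟩
        = (Nat.card {f : P → Fin n // IsOmegaOP ω f} : ℚ) := by
  intro n _
  rw [one_add_omegaAdjMatrix, Matrix.pow_apply_eq_card_relChains,
    card_isOmegaOP_eq_card_relChains]
end

section
/- Let (P, ω) be a nonempty finite labeled poset. Then its Eulerian polynomial satisfies the recursion e(P, ω; λ) = λ · ∑_{∅ ≠ S ∈ I_ω(P)} (1−λ)^{|S|−1} · e(P∖S, ω; λ), where I_ω(P) is the set of nonempty ω-natural ideals of (P, ω), and e(∅; λ) = 1. -/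
open scoped Classical

section Aux

variable {P : Type*} [Fintype P] [PartialOrder P] (ω : P → ℕ+)

/-- The type of ω-order-preserving maps from the subposet `T` to `Fin n`. -/
abbrev OP (T : Finset P) (n : ℕ) : Type _ :=
  {f : {x : P // x ∈ T} → Fin n //
      Monotone f ∧ ∀ a b : {x : P // x ∈ T}, b < a → ω a.1 < ω b.1 → f b < f a}

/-- The decomposition map: a natural ideal together with an `OP` map on its complement
gives an `OP` map on all of `P`. -/
noncomputable def Psi (n : ℕ)
    (p : Σ S : {S : Finset P // IsIdeal S ∧ IsNatural ω S}, OP ω S.1ᶜ n) :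
    OP ω (Finset.univ : Finset P) (n + 1) := by
  refine ⟨fun x => if h : x.1 ∈ p.1.1 then 0 else
    (p.2.1 ⟨x.1, Finset.mem_compl.mpr h⟩).succ, ?_, ?_⟩
  · intro x y hxy
    dsimp only
    by_cases hx : x.1 ∈ p.1.1
    · rw [dif_pos hx]; exact Fin.zero_le _
    · have hy : y.1 ∉ p.1.1 := fun hy => hx (p.1.2.1 y.1 hy x.1 hxy)
      rw [dif_neg hx, dif_neg hy]
      exact Fin.succ_le_succ_iff.mpr
        (p.2.2.1 (show (⟨x.1, _⟩ : {z : P // z ∈ p.1.1ᶜ}) ≤ ⟨y.1, _⟩ from hxy))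
  · intro a b hba hω
    dsimp only
    by_cases hb : b.1 ∈ p.1.1
    · by_cases ha : a.1 ∈ p.1.1
      · exact absurd (p.1.2.2 b.1 hb a.1 ha hba.le) (not_le.mpr hω)
      · rw [dif_pos hb, dif_neg ha]; exact Fin.succ_pos _
    · have ha : a.1 ∉ p.1.1 := fun ha => hb (p.1.2.1 a.1 ha b.1 hba.le)
      rw [dif_neg hb, dif_neg ha]
      exact Fin.succ_lt_succ_iff.mpr
        (p.2.2.2 ⟨a.1, Finset.mem_compl.mpr ha⟩ ⟨b.1, Finset.mem_compl.mpr hb⟩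
          (Subtype.mk_lt_mk.mpr hba) hω)

lemma Psi_bijective (n : ℕ) : Function.Bijective (Psi ω n) := by
  constructor
  · rintro ⟨⟨S₁, hS₁⟩, g₁, hg₁⟩ ⟨⟨S₂, hS₂⟩, g₂, hg₂⟩ h
    have hf := congrArg Subtype.val h
    dsimp only [Psi] at hf
    have hSS : S₁ = S₂ := by
      ext x
      have := congrFun hf ⟨x, Finset.mem_univ x⟩
      dsimp only at this
      constructor
      · intro hx
        by_contra hx2
        rw [dif_pos hx, dif_neg hx2] at this
        exact Fin.succ_ne_zero _ this.symm
      · intro hx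
        by_contra hx2
        rw [dif_neg hx2, dif_pos hx] at this
        exact Fin.succ_ne_zero _ this
    subst hSS
    have hgg : g₁ = g₂ := by
      funext x
      obtain ⟨x, hxc⟩ := x
      have hx : x ∉ S₁ := Finset.mem_compl.mp hxc
      have := congrFun hf ⟨x, Finset.mem_univ x⟩
      dsimp only at this
      rw [dif_neg hx, dif_neg hx] at this
      exact Fin.succ_injective _ this
    subst hgg
    rfl
  · rintro ⟨f, hf1, hf2⟩
    set S : Finset P := Finset.univ.filter (fun x => f ⟨x, Finset.mem_univ x⟩ = 0) with hSdef
    have hmem : ∀ x : P, x ∈ S ↔ f ⟨x, Finset.mem_univ x⟩ = 0 := by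
      intro x; simp [hSdef]
    have hId : IsIdeal S := by
      intro x hx y hyx
      rw [hmem] at hx ⊢
      exact Fin.le_zero_iff.mp
        (hx ▸ hf1 (show (⟨y, _⟩ : {z : P // z ∈ Finset.univ}) ≤ ⟨x, _⟩ from hyx))
    have hNat : IsNatural ω S := by
      intro x hx y hy hxy
      rcases eq_or_lt_of_le hxy with rfl | hlt
      · exact le_rfl
      by_contra hc
      have := hf2 ⟨y, Finset.mem_univ y⟩ ⟨x, Finset.mem_univ x⟩ (Subtype.mk_lt_mk.mpr hlt)
        (not_le.mp hc)
      rw [(hmem x).mp hx, (hmem y).mp hy] at this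
      exact absurd this (lt_irrefl 0)
    have hne : ∀ x : {z : P // z ∈ Sᶜ}, f ⟨x.1, Finset.mem_univ x.1⟩ ≠ 0 := by
      intro x
      have := x.2
      rw [Finset.mem_compl, hmem] at this
      exact this
    refine ⟨⟨⟨S, hId, hNat⟩, fun x => (f ⟨x.1, Finset.mem_univ x.1⟩).pred (hne x), ?_, ?_⟩, ?_⟩
    · intro x y hxy
      have := hf1 (show (⟨x.1, Finset.mem_univ x.1⟩ : {z : P // z ∈ Finset.univ}) ≤
        ⟨y.1, Finset.mem_univ y.1⟩ from hxy)
      rw [Fin.le_def] at this ⊢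
      simp only [Fin.coe_pred]
      omega
    · intro a b hba hω
      have := hf2 ⟨a.1, Finset.mem_univ a.1⟩ ⟨b.1, Finset.mem_univ b.1⟩
        (Subtype.mk_lt_mk.mpr hba) hω
      have hb0 : (f ⟨b.1, Finset.mem_univ b.1⟩ : Fin (n+1)).val ≠ 0 := by
        intro h0
        exact hne b (Fin.ext h0)
      rw [Fin.lt_def] at this ⊢
      simp only [Fin.coe_pred]
      omega
    · apply Subtype.ext
      funext x
      obtain ⟨x, hxu⟩ := x
      dsimp only [Psi]
      by_cases hx : x ∈ S
      · rw [dif_pos hx]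
        exact ((hmem x).mp hx).symm
      · rw [dif_neg hx]
        exact Fin.succ_pred _ _

lemma key_count (n : ℕ) :
    Nat.card (OP ω (Finset.univ : Finset P) (n + 1)) =
      ∑ S ∈ Finset.univ.filter (fun S : Finset P => IsIdeal S ∧ IsNatural ω S),
        Nat.card (OP ω Sᶜ n) := by
  rw [← Nat.card_eq_of_bijective _ (Psi_bijective ω n)]
  rw [Nat.card_eq_fintype_card, Fintype.card_sigma]
  rw [Finset.sum_subtype (p := fun S : Finset P => IsIdeal S ∧ IsNatural ω S) _
    (fun S => by simp) (fun S => Nat.card (OP ω Sᶜ n))]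
  congr 1
  funext S
  rw [Nat.card_eq_fintype_card]

end Aux

/-- Let `(P, ω)` be a nonempty finite labeled poset and, for each subset `T ⊆ P`, let `E T` be
the Eulerian polynomial of the induced labeled sub-poset on `T`, defined by
`∑_{n≥0} Ω(T,ω;n)λ^n = (E T)(λ)/(1-λ)^{|T|+1}` (denominators cleared in `ℚ⟦λ⟧`), where
`Ω(T,ω;n)` counts `ω`-order-preserving maps `T → [n]`. Then
`e(P,ω;λ) = λ ∑_{∅ ≠ S ∈ I_ω(P)} (1-λ)^{|S|-1} e(P∖S,ω;λ)`, the sum being over all nonempty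
`ω`-natural ideals `S` of `(P, ω)`. -/
theorem stmt_19 {P : Type*} [Fintype P] [PartialOrder P] [Nonempty P]
    (ω : P → ℕ+) (hω : Function.Injective ω)
    (E : Finset P → Polynomial ℚ)
    (hE : ∀ T : Finset P,
      (PowerSeries.mk fun n => (Nat.card {f : {x : P // x ∈ T} → Fin n //
          Monotone f ∧ ∀ a b : {x : P // x ∈ T}, b < a → ω a.1 < ω b.1 → f b < f a} : ℚ)) *
        ((1 - Polynomial.X : Polynomial ℚ) : PowerSeries ℚ) ^ (T.card + 1)
      = ((E T : Polynomial ℚ) : PowerSeries ℚ)) :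
    E Finset.univ = Polynomial.X * ∑ S ∈ Finset.univ.filter
        (fun S : Finset P => S.Nonempty ∧ IsIdeal S ∧ IsNatural ω S),
      (1 - Polynomial.X) ^ (S.card - 1) * E Sᶜ := by
  classical
  set F := Finset.univ.filter
    (fun S : Finset P => S.Nonempty ∧ IsIdeal S ∧ IsNatural ω S) with hF
  set Z : PowerSeries ℚ := ((1 - Polynomial.X : Polynomial ℚ) : PowerSeries ℚ) with hZdef
  set Om : Finset P → PowerSeries ℚ := fun T => PowerSeries.mk
    (fun n => (Nat.card (OP ω T n) : ℚ)) with hOm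
  have hE' : ∀ T : Finset P, Om T * Z ^ (T.card + 1)
        = ((E T : Polynomial ℚ) : PowerSeries ℚ) := hE
  have hsplit : (Finset.univ.filter (fun S : Finset P => IsIdeal S ∧ IsNatural ω S))
      = insert ∅ F := by
    ext S
    simp only [Finset.mem_filter, Finset.mem_univ, true_and, Finset.mem_insert, hF]
    constructor
    · rintro ⟨h1, h2⟩
      rcases S.eq_empty_or_nonempty with rfl | hne
      · exact Or.inl rfl
      · exact Or.inr ⟨hne, h1, h2⟩
    · rintro (rfl | ⟨_, h1, h2⟩)
      · exact ⟨fun x hx => absurd hx (by simp), fun x hx => absurd hx (by simp)⟩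
      · exact ⟨h1, h2⟩
  have hkey : ∀ n : ℕ, Nat.card (OP ω (Finset.univ : Finset P) (n + 1)) =
      Nat.card (OP ω (Finset.univ : Finset P) n) + ∑ S ∈ F, Nat.card (OP ω Sᶜ n) := by
    intro n
    rw [key_count ω n, hsplit, Finset.sum_insert (by simp [hF])]
    congr 2
    rw [show ((∅ : Finset P)ᶜ) = Finset.univ from Finset.compl_empty]
  have hzero : Nat.card (OP ω (Finset.univ : Finset P) 0) = 0 := by
    have : IsEmpty ({x : P // x ∈ (Finset.univ : Finset P)} → Fin 0) :=
      ⟨fun f => (f ⟨Classical.arbitrary P, Finset.mem_univ _⟩).elim0⟩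
    exact Nat.card_of_isEmpty
  have hZ : Z = 1 - PowerSeries.X := by
    rw [hZdef]; push_cast; simp
  -- power series recursion
  have hrec : Om Finset.univ * Z
      = ((Polynomial.X : Polynomial ℚ) : PowerSeries ℚ) * ∑ S ∈ F, Om Sᶜ := by
    rw [hZ, Polynomial.coe_X]
    ext m
    rw [mul_sub, mul_one, mul_comm (Om Finset.univ) PowerSeries.X, map_sub]
    cases m with
    | zero =>
        rw [PowerSeries.coeff_zero_X_mul, PowerSeries.coeff_zero_X_mul]
        simp only [hOm, PowerSeries.coeff_mk, hzero, sub_zero]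
        norm_num
    | succ n =>
        rw [PowerSeries.coeff_succ_X_mul, PowerSeries.coeff_succ_X_mul]
        simp only [hOm, PowerSeries.coeff_mk, map_sum]
        have hcast : (Nat.card (OP ω (Finset.univ : Finset P) (n + 1)) : ℚ) =
            (Nat.card (OP ω (Finset.univ : Finset P) n) : ℚ) +
            ∑ S ∈ F, (Nat.card (OP ω Sᶜ n) : ℚ) := by exact_mod_cast hkey n
        rw [hcast]; ring
  -- now assemble
  have hsum : ((∑ S ∈ F, (1 - Polynomial.X) ^ (S.card - 1) * E Sᶜ : Polynomial ℚ) :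
      PowerSeries ℚ) = ∑ S ∈ F, Z ^ (S.card - 1) * ((E Sᶜ : Polynomial ℚ) : PowerSeries ℚ) := by
    rw [← Polynomial.coeToPowerSeries.ringHom_apply, map_sum]
    refine Finset.sum_congr rfl fun S _ => ?_
    simp only [map_mul, map_pow, map_sub, map_one,
      Polynomial.coeToPowerSeries.ringHom_apply, hZdef]
    push_cast
    ring
  apply Polynomial.coe_inj.mp
  rw [Polynomial.coe_mul, Polynomial.coe_X, hsum, ← hE' Finset.univ,
    pow_succ', ← mul_assoc, hrec, Polynomial.coe_X, mul_assoc, Finset.sum_mul]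
  congr 1
  refine Finset.sum_congr rfl ?_
  intro S hS
  simp only [hF, Finset.mem_filter, Finset.mem_univ, true_and] at hS
  obtain ⟨hne, hId, hNat⟩ := hS
  have h1 : 1 ≤ S.card := Finset.card_pos.mpr hne
  have h2 : S.card ≤ Fintype.card P := S.card_le_univ
  have hc : Sᶜ.card = Fintype.card P - S.card := Finset.card_compl S
  have hexp : (Finset.univ : Finset P).card = (S.card - 1) + (Sᶜ.card + 1) := by
    rw [Finset.card_univ, hc]; omega
  rw [hexp, pow_add, ← mul_assoc, mul_comm (Om Sᶜ) (Z ^ (S.card - 1)), mul_assoc,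
    hE' Sᶜ]
end
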